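/- Let $F : [0,1] \to \mathbb{R}$ be continuous and $H : \mathbb{R} \to \mathbb{R}$ smooth with $H(0) \neq 0$, and let $n \geq 3$ be odd. If $\int_0^s F(u)\,H((su-u^2)^{1/2})\,(su-u^2)^{(n-3)/2}\,du = 0$ for all $s \in [0,1]$, then $F \equiv 0$ on $[0,1]$. -/

import Mathlib

open MeasureTheory Set intervalIntegral Real

namespace Thm27Aux

noncomputable def psi (s u : ℝ) : ℝ := u ^ (-(1/2) : ℝ) * (s - u) ^ (-(1/2) : ℝ)

lemma psi_meas (s : ℝ) : Measurable (psi s) := by unfold psi; fun_prop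

lemma psi_nonneg {s u : ℝ} (hu : 0 ≤ u) (hus : u ≤ s) : 0 ≤ psi s u :=
  mul_nonneg (Real.rpow_nonneg hu _) (Real.rpow_nonneg (by linarith) _)

lemma intervalIntegrable_rpow_neg_half (a b : ℝ) :
    IntervalIntegrable (fun u : ℝ => u ^ (-(1/2) : ℝ)) volume a b :=
  intervalIntegrable_rpow' (by norm_num)

lemma intervalIntegrable_flip (a s : ℝ) :
    IntervalIntegrable (fun u => (s - u) ^ (-(1/2) : ℝ)) volume a s := by
  have h := (intervalIntegrable_rpow' (a := s - s) (b := s - a) (r := -(1/2))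
    (by norm_num)).comp_sub_left s
  simpa using h.symm

lemma integral_flip {a s : ℝ} (h : a ≤ s) :
    ∫ u in a..s, (s - u) ^ (-(1/2) : ℝ) = 2 * Real.sqrt (s - a) := by
  have := intervalIntegral.integral_comp_sub_left (a := a) (b := s)
    (fun x => x ^ (-(1/2) : ℝ)) s
  rw [this, integral_rpow (Or.inl (by norm_num)), sub_self, Real.sqrt_eq_rpow]
  rw [show (-(1/2) : ℝ) + 1 = 1/2 by norm_num, Real.zero_rpow (by norm_num)]
  ring

lemma integral_rpow_neg_half {b : ℝ} (hb : 0 ≤ b) :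
    ∫ u in (0:ℝ)..b, u ^ (-(1/2) : ℝ) = 2 * b ^ ((1/2) : ℝ) := by
  rw [integral_rpow (Or.inl (by norm_num)),
    show (-(1/2) : ℝ) + 1 = 1/2 by norm_num, Real.zero_rpow (by norm_num)]
  ring

lemma psi_int_left {s : ℝ} (hs : 0 < s) :
    IntervalIntegrable (psi s) volume 0 (s/2) := by
  have hbase : IntervalIntegrable (fun u : ℝ => u ^ (-(1/2):ℝ) * (s/2) ^ (-(1/2):ℝ))
      volume 0 (s/2) := (intervalIntegrable_rpow_neg_half 0 (s/2)).mul_const _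
  refine hbase.mono_fun ((psi_meas s).aestronglyMeasurable) ?_
  filter_upwards [ae_restrict_mem measurableSet_uIoc] with u hu
  rw [uIoc_of_le (by linarith)] at hu
  obtain ⟨hu1, hu2⟩ := hu
  simp only [psi]
  have h1 : (0:ℝ) ≤ u ^ (-(1/2):ℝ) := Real.rpow_nonneg hu1.le _
  have h2 : (s - u) ^ (-(1/2):ℝ) ≤ (s/2) ^ (-(1/2):ℝ) :=
    Real.rpow_le_rpow_of_nonpos (by linarith) (by linarith) (by norm_num)
  have h3 : (0:ℝ) ≤ (s - u) ^ (-(1/2):ℝ) := Real.rpow_nonneg (by linarith) _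
  rw [Real.norm_eq_abs, Real.norm_eq_abs, abs_of_nonneg (mul_nonneg h1 h3),
    abs_of_nonneg (mul_nonneg h1 (Real.rpow_nonneg (by linarith) _))]
  exact mul_le_mul_of_nonneg_left h2 h1

lemma psi_int_right {s : ℝ} (hs : 0 < s) :
    IntervalIntegrable (psi s) volume (s/2) s := by
  have hbase : IntervalIntegrable (fun u : ℝ => (s/2) ^ (-(1/2):ℝ) * (s - u) ^ (-(1/2):ℝ))
      volume (s/2) s := (intervalIntegrable_flip (s/2) s).const_mul _
  refine hbase.mono_fun ((psi_meas s).aestronglyMeasurable) ?_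
  filter_upwards [ae_restrict_mem measurableSet_uIoc] with u hu
  rw [uIoc_of_le (by linarith)] at hu
  obtain ⟨hu1, hu2⟩ := hu
  simp only [psi]
  have h1 : (0:ℝ) ≤ (s - u) ^ (-(1/2):ℝ) := Real.rpow_nonneg (by linarith) _
  have h2 : u ^ (-(1/2):ℝ) ≤ (s/2) ^ (-(1/2):ℝ) :=
    Real.rpow_le_rpow_of_nonpos (by linarith) hu1.le (by norm_num)
  have h3 : (0:ℝ) ≤ u ^ (-(1/2):ℝ) := Real.rpow_nonneg (by linarith) _
  rw [Real.norm_eq_abs, Real.norm_eq_abs, abs_of_nonneg (mul_nonneg h3 h1),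
    abs_of_nonneg (mul_nonneg (Real.rpow_nonneg (by linarith) _) h1)]
  exact mul_le_mul_of_nonneg_right h2 h1

lemma psi_int {s : ℝ} (hs : 0 < s) : IntervalIntegrable (psi s) volume 0 s :=
  (psi_int_left hs).trans (psi_int_right hs)

lemma rpow_half_cancel {x : ℝ} (hx : 0 < x) : x ^ ((1/2):ℝ) * x ^ (-(1/2):ℝ) = 1 := by
  rw [← Real.rpow_add hx]; norm_num

lemma psi_integral_le {s : ℝ} (hs : 0 < s) : ∫ u in (0:ℝ)..s, psi s u ≤ 4 := by
  have h2 : (0:ℝ) < s/2 := by linarith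
  have hL : ∫ u in (0:ℝ)..(s/2), psi s u ≤ 2 := by
    have hb : IntervalIntegrable (fun u : ℝ => u ^ (-(1/2):ℝ) * (s/2) ^ (-(1/2):ℝ))
        volume 0 (s/2) := (intervalIntegrable_rpow_neg_half 0 (s/2)).mul_const _
    have := intervalIntegral.integral_mono_on (by linarith : (0:ℝ) ≤ s/2)
      (psi_int_left hs) hb (fun u hu => ?_)
    · refine this.trans (le_of_eq ?_)
      rw [intervalIntegral.integral_mul_const, integral_rpow_neg_half (by linarith)]
      calc 2 * (s/2) ^ ((1/2):ℝ) * (s/2) ^ (-(1/2):ℝ)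
          = 2 * ((s/2) ^ ((1/2):ℝ) * (s/2) ^ (-(1/2):ℝ)) := by ring
        _ = 2 := by rw [rpow_half_cancel h2]; norm_num
    · obtain ⟨hu1, hu2⟩ := hu
      simp only [psi]
      have h1 : (0:ℝ) ≤ u ^ (-(1/2):ℝ) := Real.rpow_nonneg hu1 _
      have hle : (s - u) ^ (-(1/2):ℝ) ≤ (s/2) ^ (-(1/2):ℝ) :=
        Real.rpow_le_rpow_of_nonpos (by linarith) (by linarith) (by norm_num)
      exact mul_le_mul_of_nonneg_left hle h1
  have hR : ∫ u in (s/2)..s, psi s u ≤ 2 := by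
    have hb : IntervalIntegrable (fun u : ℝ => (s/2) ^ (-(1/2):ℝ) * (s - u) ^ (-(1/2):ℝ))
        volume (s/2) s := (intervalIntegrable_flip (s/2) s).const_mul _
    have := intervalIntegral.integral_mono_on (by linarith : s/2 ≤ s)
      (psi_int_right hs) hb (fun u hu => ?_)
    · refine this.trans (le_of_eq ?_)
      rw [intervalIntegral.integral_const_mul, integral_flip (by linarith : s/2 ≤ s)]
      rw [show s - s/2 = s/2 by ring, Real.sqrt_eq_rpow]
      calc (s/2) ^ (-(1/2):ℝ) * (2 * (s/2) ^ ((1/2):ℝ))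
          = 2 * ((s/2) ^ ((1/2):ℝ) * (s/2) ^ (-(1/2):ℝ)) := by ring
        _ = 2 := by rw [rpow_half_cancel h2]; norm_num
    · obtain ⟨hu1, hu2⟩ := hu
      simp only [psi]
      have h1 : (0:ℝ) ≤ (s - u) ^ (-(1/2):ℝ) := Real.rpow_nonneg (by linarith) _
      have hle : u ^ (-(1/2):ℝ) ≤ (s/2) ^ (-(1/2):ℝ) :=
        Real.rpow_le_rpow_of_nonpos h2 hu1 (by norm_num)
      exact mul_le_mul_of_nonneg_right hle h1
  calc ∫ u in (0:ℝ)..s, psi s u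
      = (∫ u in (0:ℝ)..(s/2), psi s u) + ∫ u in (s/2)..s, psi s u :=
        (intervalIntegral.integral_add_adjacent_intervals (psi_int_left hs)
          (psi_int_right hs)).symm
    _ ≤ 4 := by linarith

lemma psi_weighted_int {s : ℝ} (hs : 0 < s) (hs1 : s ≤ 1) (j : ℕ) :
    IntervalIntegrable (fun u => u ^ j * psi s u) volume 0 s := by
  refine ((psi_int hs).const_mul (s^j)).mono_fun
    ((measurable_id.pow_const j).mul (psi_meas s)).aestronglyMeasurable ?_
  filter_upwards [ae_restrict_mem measurableSet_uIoc] with u hu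
  rw [uIoc_of_le hs.le] at hu
  obtain ⟨hu1, hu2⟩ := hu
  have hψ : 0 ≤ psi s u := psi_nonneg hu1.le hu2
  rw [Real.norm_eq_abs, Real.norm_eq_abs, abs_of_nonneg (mul_nonneg (pow_nonneg hu1.le _) hψ),
    abs_of_nonneg (mul_nonneg (pow_nonneg (by linarith : (0:ℝ) ≤ s) _) hψ)]
  exact mul_le_mul_of_nonneg_right (pow_le_pow_left₀ hu1.le hu2 j) hψ

lemma psi_weighted_integral_le {s : ℝ} (hs : 0 < s) (hs1 : s ≤ 1) (j : ℕ) :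
    ∫ u in (0:ℝ)..s, u ^ j * psi s u ≤ 4 * s ^ j := by
  have h1 : ∫ u in (0:ℝ)..s, u ^ j * psi s u ≤ ∫ u in (0:ℝ)..s, s ^ j * psi s u := by
    refine intervalIntegral.integral_mono_on hs.le (psi_weighted_int hs hs1 j)
      ((psi_int hs).const_mul _) (fun u hu => ?_)
    exact mul_le_mul_of_nonneg_right (pow_le_pow_left₀ hu.1 hu.2 j)
      (psi_nonneg hu.1 hu.2)
  rw [intervalIntegral.integral_const_mul] at h1
  have h2 : s ^ j * ∫ u in (0:ℝ)..s, psi s u ≤ s ^ j * 4 :=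
    mul_le_mul_of_nonneg_left (psi_integral_le hs) (pow_nonneg hs.le _)
  linarith


noncomputable def Wk (H : ℝ → ℝ) (s u : ℝ) : ℝ :=
  deriv H (Real.sqrt (s * u - u ^ 2)) * (1 / (2 * Real.sqrt (s * u - u ^ 2)) * (s - 2 * u))


lemma inv_sqrt_eq {x : ℝ} (hx : 0 ≤ x) : (Real.sqrt x)⁻¹ = x ^ (-(1/2) : ℝ) := by
  rw [Real.sqrt_eq_rpow, ← Real.rpow_neg hx]

lemma Wk_meas (H : ℝ → ℝ) (hH' : Continuous (deriv H)) (s : ℝ) : Measurable (Wk H s) := by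
  have hsqrt : Continuous fun u : ℝ => Real.sqrt (s * u - u ^ 2) :=
    Real.continuous_sqrt.comp ((continuous_const.mul continuous_id).sub (continuous_pow 2))
  exact ((hH'.comp hsqrt).measurable).mul
    ((((continuous_const.mul hsqrt).measurable).inv.const_mul 1).mul
      ((continuous_const.sub (continuous_const.mul continuous_id)).measurable))

lemma sqrt_factor {s u : ℝ} (hu : 0 ≤ u) :
    Real.sqrt (s * u - u ^ 2) = Real.sqrt u * Real.sqrt (s - u) := by
  rw [← Real.sqrt_mul hu]; ring_nf

lemma sqrt_arg_mem {s u : ℝ} (hu : 0 ≤ u) (hus : u ≤ s) (hs1 : s ≤ 1) :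
    Real.sqrt (s * u - u ^ 2) ∈ Icc (0:ℝ) 1 := by
  constructor
  · exact Real.sqrt_nonneg _
  · rw [show (1:ℝ) = Real.sqrt 1 by simp]
    apply Real.sqrt_le_sqrt
    nlinarith

/-- Master form of the kernel bound. -/
lemma Wk_abs_le {H : ℝ → ℝ} {B : ℝ} (hB : ∀ t ∈ Icc (0:ℝ) 1, |deriv H t| ≤ B)
    {s u : ℝ} (hu : 0 < u) (hus : u ≤ s) (hs1 : s ≤ 1) :
    |Wk H s u| ≤ B * ((1/2) * ((Real.sqrt u)⁻¹ * (Real.sqrt (s - u))⁻¹)) * |s - 2*u| := by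
  have hB0 : 0 ≤ B := le_trans (abs_nonneg _) (hB 0 (by constructor <;> norm_num))
  have h1 : |deriv H (Real.sqrt (s * u - u ^ 2))| ≤ B := hB _ (sqrt_arg_mem hu.le hus hs1)
  have h2 : 1 / (2 * Real.sqrt (s * u - u ^ 2))
      = (1/2) * ((Real.sqrt u)⁻¹ * (Real.sqrt (s - u))⁻¹) := by
    rw [sqrt_factor hu.le]
    rw [one_div, mul_inv, mul_inv]
    ring
  rw [Wk, abs_mul, abs_mul, h2]
  have h3 : 0 ≤ (1/2) * ((Real.sqrt u)⁻¹ * (Real.sqrt (s - u))⁻¹) := by positivity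
  rw [abs_of_nonneg h3, ← mul_assoc]
  exact mul_le_mul_of_nonneg_right (mul_le_mul_of_nonneg_right h1 h3) (abs_nonneg _)

/-- Bound used on `[0, σ]`. -/
lemma Wk_bound_A {H : ℝ → ℝ} {B : ℝ} (hB : ∀ t ∈ Icc (0:ℝ) 1, |deriv H t| ≤ B)
    {s u : ℝ} (hu : 0 < u) (hus : u ≤ s) (hs1 : s ≤ 1) :
    |Wk H s u| ≤ (B/2) * s * psi s u := by
  have hB0 : 0 ≤ B := le_trans (abs_nonneg _) (hB 0 (by constructor <;> norm_num))
  refine (Wk_abs_le hB hu hus hs1).trans ?_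
  have h4 : |s - 2*u| ≤ s := by
    rw [abs_le]; constructor <;> linarith
  have h5 : B * ((1/2) * ((Real.sqrt u)⁻¹ * (Real.sqrt (s - u))⁻¹)) * |s - 2*u|
      ≤ B * ((1/2) * ((Real.sqrt u)⁻¹ * (Real.sqrt (s - u))⁻¹)) * s :=
    mul_le_mul_of_nonneg_left h4 (by positivity)
  refine h5.trans (le_of_eq ?_)
  rw [psi, ← inv_sqrt_eq hu.le, ← inv_sqrt_eq (by linarith : (0:ℝ) ≤ s - u)]
  ring

/-- Bound used on `[a, b]` for `a > 0`. -/
lemma Wk_bound_B {H : ℝ → ℝ} {B : ℝ} (hB : ∀ t ∈ Icc (0:ℝ) 1, |deriv H t| ≤ B)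
    {a s u : ℝ} (ha : 0 < a) (hau : a ≤ u) (hus : u ≤ s) (hs1 : s ≤ 1) :
    |Wk H s u| ≤ (B/2) * (Real.sqrt a)⁻¹ * (s - u) ^ (-(1/2) : ℝ) := by
  have hB0 : 0 ≤ B := le_trans (abs_nonneg _) (hB 0 (by constructor <;> norm_num))
  have hu : 0 < u := lt_of_lt_of_le ha hau
  refine (Wk_abs_le hB hu hus hs1).trans ?_
  have h4 : |s - 2*u| ≤ 1 := by
    rw [abs_le]; constructor <;> nlinarith
  have h6 : (Real.sqrt u)⁻¹ ≤ (Real.sqrt a)⁻¹ := by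
    apply inv_anti₀ (Real.sqrt_pos.2 ha) (Real.sqrt_le_sqrt hau)
  calc B * ((1/2) * ((Real.sqrt u)⁻¹ * (Real.sqrt (s - u))⁻¹)) * |s - 2*u|
      ≤ B * ((1/2) * ((Real.sqrt u)⁻¹ * (Real.sqrt (s - u))⁻¹)) * 1 :=
        mul_le_mul_of_nonneg_left h4 (by positivity)
    _ = (B/2) * (Real.sqrt u)⁻¹ * (Real.sqrt (s - u))⁻¹ := by ring
    _ ≤ (B/2) * (Real.sqrt a)⁻¹ * (Real.sqrt (s - u))⁻¹ := by
        apply mul_le_mul_of_nonneg_right _ (by positivity)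
        exact mul_le_mul_of_nonneg_left h6 (by positivity)
    _ = (B/2) * (Real.sqrt a)⁻¹ * (s - u) ^ (-(1/2) : ℝ) := by
        rw [inv_sqrt_eq (by linarith : (0:ℝ) ≤ s - u)]



noncomputable def Qf (G : ℝ → ℝ) (a u : ℝ) : ℝ := ∫ t in a..u, G t

lemma Qf_hasDeriv {G : ℝ → ℝ} (hG : Continuous G) (a u : ℝ) :
    HasDerivAt (Qf G a) (G u) u :=
  intervalIntegral.integral_hasDerivAt_right (hG.intervalIntegrable a u)
    (hG.stronglyMeasurableAtFilter volume (nhds u)) hG.continuousAt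

lemma Qf_cont {G : ℝ → ℝ} (hG : Continuous G) (a : ℝ) : Continuous (Qf G a) := by
  have : Differentiable ℝ (Qf G a) := fun u => (Qf_hasDeriv hG a u).differentiableAt
  exact this.continuous

lemma hcont_kernel {H : ℝ → ℝ} (hH : Continuous H) (s : ℝ) :
    Continuous (fun u : ℝ => H (Real.sqrt (s * u - u ^ 2))) :=
  hH.comp (Real.continuous_sqrt.comp
    ((continuous_const.mul continuous_id).sub (continuous_pow 2)))

/-- Integration by parts identity. -/
lemma ibp {G H : ℝ → ℝ} (hG : Continuous G) (hH : Continuous H) (hHd : Differentiable ℝ H)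
    {a s : ℝ} (ha : 0 ≤ a) (has : a ≤ s)
    (hGa : ∀ u ∈ Ioc (0:ℝ) a, G u = 0)
    (heqs : ∫ u in (0:ℝ)..s, G u * H (Real.sqrt (s * u - u ^ 2)) = 0)
    (hQW : IntervalIntegrable (fun u => Qf G a u * Wk H s u) volume a s) :
    Qf G a s * H 0 = ∫ u in a..s, Qf G a u * Wk H s u := by
  set h : ℝ → ℝ := fun u => H (Real.sqrt (s * u - u ^ 2)) with hh
  have hhc : Continuous h := hcont_kernel hH s
  -- FTC for the product
  have hderiv : ∀ u ∈ Ioo a s,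
      HasDerivAt (fun u => Qf G a u * h u) (G u * h u + Qf G a u * Wk H s u) u := by
    intro u hu
    have hu0 : 0 < u := lt_of_le_of_lt ha hu.1
    have hr : 0 < s * u - u ^ 2 := by nlinarith [hu.2, hu0]
    have hinner : HasDerivAt (fun u : ℝ => s * u - u ^ 2) (s - 2 * u) u := by
      have h1 := ((hasDerivAt_id u).const_mul s).sub (hasDerivAt_pow 2 u)
      refine h1.congr_deriv ?_; ring
    have hsq : HasDerivAt (fun u : ℝ => Real.sqrt (s * u - u ^ 2))
        (1 / (2 * Real.sqrt (s * u - u ^ 2)) * (s - 2 * u)) u :=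
      (Real.hasDerivAt_sqrt hr.ne').comp u hinner
    have hhu : HasDerivAt h (Wk H s u) u :=
      ((hHd _).hasDerivAt).comp u hsq
    exact (Qf_hasDeriv hG a u).mul hhu
  have hcont : ContinuousOn (fun u => Qf G a u * h u) (Icc a s) :=
    ((Qf_cont hG a).mul hhc).continuousOn
  have hGh_int : ∀ b c : ℝ, IntervalIntegrable (fun u => G u * h u) volume b c :=
    fun b c => (hG.mul hhc).intervalIntegrable b c
  have hint : IntervalIntegrable (fun u => G u * h u + Qf G a u * Wk H s u) volume a s :=
    (hGh_int a s).add hQW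
  have hftc := intervalIntegral.integral_eq_sub_of_hasDerivAt_of_le has hcont hderiv hint
  -- compute the boundary terms
  have hbs : h s = H 0 := by
    simp only [hh]
    rw [show s * s - s ^ 2 = 0 by ring, Real.sqrt_zero]
  have hba : Qf G a a = 0 := intervalIntegral.integral_same
  rw [hba, zero_mul, sub_zero, hbs] at hftc
  -- split the integral
  rw [intervalIntegral.integral_add (hGh_int a s) hQW] at hftc
  -- the first piece vanishes
  have h0a : ∫ u in (0:ℝ)..a, G u * h u = 0 := by
    rw [intervalIntegral.integral_of_le ha,
      MeasureTheory.setIntegral_congr_fun (g := fun _ => (0:ℝ)) measurableSet_Ioc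
        (fun u hu => by rw [hGa u hu, zero_mul])]
    simp
  have hsplit : (∫ u in (0:ℝ)..a, G u * h u) + ∫ u in a..s, G u * h u
      = ∫ u in (0:ℝ)..s, G u * h u :=
    intervalIntegral.integral_add_adjacent_intervals (hGh_int 0 a) (hGh_int a s)
  rw [h0a, zero_add] at hsplit
  rw [hsplit, heqs, zero_add] at hftc
  linarith [hftc]


lemma stepA {G H : ℝ → ℝ} (hG : Continuous G) (hHc : Continuous H)
    (hHd : Differentiable ℝ H) (hH' : Continuous (deriv H)) (hH0 : H 0 ≠ 0)
    (heq : ∀ s ∈ Icc (0:ℝ) 1, ∫ u in (0:ℝ)..s, G u * H (Real.sqrt (s * u - u ^ 2)) = 0) :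
    ∃ σ : ℝ, 0 < σ ∧ σ ≤ 1 ∧ ∀ u ∈ Icc (0:ℝ) σ, G u = 0 := by
  obtain ⟨t0, ht0m, ht0⟩ := isCompact_Icc.exists_isMaxOn
    (⟨0, by norm_num⟩ : (Icc (0:ℝ) 1).Nonempty) hH'.abs.continuousOn
  set B := |deriv H t0| + 1 with hBdef
  have hB : ∀ t ∈ Icc (0:ℝ) 1, |deriv H t| ≤ B := by
    intro t ht
    have := (isMaxOn_iff.mp ht0) t ht
    linarith [this]
  have hB0 : (0:ℝ) < B := by positivity
  obtain ⟨t1, ht1m, ht1⟩ := isCompact_Icc.exists_isMaxOn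
    (⟨0, by norm_num⟩ : (Icc (0:ℝ) 1).Nonempty) hG.abs.continuousOn
  set M := |G t1| with hMdef
  have hM : ∀ t ∈ Icc (0:ℝ) 1, |G t| ≤ M := fun t ht => (isMaxOn_iff.mp ht1) t ht
  have hM0 : (0:ℝ) ≤ M := abs_nonneg _
  set c := |H 0| with hcdef
  have hc : (0:ℝ) < c := abs_pos.mpr hH0
  set K := 2 * B / c with hKdef
  have hK0 : (0:ℝ) ≤ K := by positivity
  set σ := min 1 (c / (4 * B)) with hσdef
  have hσ0 : (0:ℝ) < σ := lt_min one_pos (by positivity)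
  have hσ1 : σ ≤ 1 := min_le_left _ _
  have hKσ : K * σ ≤ 1 / 2 := by
    have h1 : K * σ ≤ K * (c / (4 * B)) :=
      mul_le_mul_of_nonneg_left (min_le_right _ _) hK0
    have h2 : K * (c / (4 * B)) = 1 / 2 := by
      rw [hKdef]; field_simp; ring
    linarith
  have key : ∀ j : ℕ, ∀ s ∈ Icc (0:ℝ) σ, |Qf G 0 s| ≤ M * K ^ j * s ^ j := by
    intro j
    induction j with
    | zero =>
      intro s hs
      simp only [pow_zero, mul_one]
      have h1 : ‖∫ u in (0:ℝ)..s, G u‖ ≤ M * |s - 0| := by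
        apply intervalIntegral.norm_integral_le_of_norm_le_const
        intro x hx
        rw [uIoc_of_le hs.1] at hx
        exact hM x ⟨hx.1.le, hx.2.trans (hs.2.trans hσ1)⟩
      rw [Real.norm_eq_abs] at h1
      have h2 : |s - 0| ≤ 1 := by
        rw [sub_zero, abs_of_nonneg hs.1]; exact hs.2.trans hσ1
      calc |Qf G 0 s| ≤ M * |s - 0| := h1
        _ ≤ M * 1 := mul_le_mul_of_nonneg_left h2 hM0
        _ = M := mul_one M
    | succ j ih =>
      intro s hs
      rcases eq_or_lt_of_le hs.1 with heq0 | hs0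
      · rw [← heq0]
        simp [Qf, zero_pow (Nat.succ_ne_zero j)]
      · have hs1 : s ≤ 1 := hs.2.trans hσ1
        set C := M * K ^ j * (B / 2) * s with hC
        have hC0 : (0:ℝ) ≤ C := mul_nonneg (by positivity) hs0.le
        have hdom : ∀ u ∈ Set.uIoc (0:ℝ) s, ‖Qf G 0 u * Wk H s u‖ ≤ C * (u ^ j * psi s u) := by
          intro u hu
          rw [uIoc_of_le hs0.le] at hu
          have h1 : |Qf G 0 u| ≤ M * K ^ j * u ^ j := ih u ⟨hu.1.le, hu.2.trans hs.2⟩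
          have h2 : |Wk H s u| ≤ (B / 2) * s * psi s u := Wk_bound_A hB hu.1 hu.2 hs1
          rw [norm_mul, Real.norm_eq_abs, Real.norm_eq_abs]
          calc |Qf G 0 u| * |Wk H s u| ≤ (M * K ^ j * u ^ j) * ((B / 2) * s * psi s u) :=
                mul_le_mul h1 h2 (abs_nonneg _) (mul_nonneg (mul_nonneg hM0 (pow_nonneg hK0 j)) (pow_nonneg hu.1.le j))
            _ = C * (u ^ j * psi s u) := by rw [hC]; ring
        have hgint : IntervalIntegrable (fun u => C * (u ^ j * psi s u)) volume 0 s :=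
          (psi_weighted_int hs0 hs1 j).const_mul C
        have hQWint : IntervalIntegrable (fun u => Qf G 0 u * Wk H s u) volume 0 s := by
          refine hgint.mono_fun
            (((Qf_cont hG 0).measurable.mul (Wk_meas H hH' s)).aestronglyMeasurable) ?_
          filter_upwards [ae_restrict_mem measurableSet_uIoc] with u hu
          exact (hdom u hu).trans ((le_abs_self _).trans_eq (Real.norm_eq_abs _).symm)
        have hibp := ibp hG hHc hHd le_rfl hs0.le
          (fun u hu => ((lt_irrefl (0:ℝ)) (hu.1.trans_le hu.2)).elim)
          (heq s ⟨hs.1, hs1⟩) hQWint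
        have hest : ‖∫ u in (0:ℝ)..s, Qf G 0 u * Wk H s u‖
            ≤ |∫ u in (0:ℝ)..s, C * (u ^ j * psi s u)| := by
          apply intervalIntegral.norm_integral_le_abs_of_norm_le _ hgint
          filter_upwards [ae_restrict_mem measurableSet_uIoc] with u hu
          exact hdom u hu
        have hnn : (0:ℝ) ≤ ∫ u in (0:ℝ)..s, u ^ j * psi s u := by
          apply intervalIntegral.integral_nonneg hs0.le
          intro u hu
          exact mul_nonneg (pow_nonneg hu.1 j) (psi_nonneg hu.1 hu.2)
        have habs : |∫ u in (0:ℝ)..s, C * (u ^ j * psi s u)|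
            = C * ∫ u in (0:ℝ)..s, u ^ j * psi s u := by
          rw [intervalIntegral.integral_const_mul, abs_of_nonneg (mul_nonneg hC0 hnn)]
        have hfin : |Qf G 0 s| * c ≤ C * (4 * s ^ j) := by
          have h3 : |Qf G 0 s| * c = |Qf G 0 s * H 0| := by
            rw [abs_mul, hcdef]
          rw [h3, hibp, ← Real.norm_eq_abs]
          refine hest.trans ?_
          rw [habs]
          exact (mul_le_mul_of_nonneg_left (psi_weighted_integral_le hs0 hs1 j) hC0).trans
            (le_of_eq (by ring))
        have hgoal : M * K ^ (j + 1) * s ^ (j + 1) * c = C * (4 * s ^ j) := by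
          rw [hC, hKdef, pow_succ, pow_succ]
          field_simp
          ring
        have := hfin.trans_eq hgoal.symm
        exact le_of_mul_le_mul_right this hc
  have hQ0 : ∀ s ∈ Icc (0:ℝ) σ, Qf G 0 s = 0 := by
    intro s hs
    have hb : ∀ j : ℕ, |Qf G 0 s| ≤ M * (1 / 2 : ℝ) ^ j := by
      intro j
      have h1 := key j s hs
      have h3 : (K * s) ^ j ≤ (1 / 2 : ℝ) ^ j := by
        apply pow_le_pow_left₀ (mul_nonneg hK0 hs.1)
        exact (mul_le_mul_of_nonneg_left hs.2 hK0).trans hKσ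
      calc |Qf G 0 s| ≤ M * K ^ j * s ^ j := h1
        _ = M * (K * s) ^ j := by rw [mul_pow]; ring
        _ ≤ M * (1 / 2 : ℝ) ^ j := mul_le_mul_of_nonneg_left h3 hM0
    have hlim : Filter.Tendsto (fun j : ℕ => M * (1 / 2 : ℝ) ^ j) Filter.atTop (nhds 0) := by
      have h := tendsto_pow_atTop_nhds_zero_of_lt_one (by norm_num : (0:ℝ) ≤ 1 / 2)
        (by norm_num : (1 / 2 : ℝ) < 1)
      simpa using h.const_mul M
    have hge := ge_of_tendsto hlim (Filter.Eventually.of_forall hb)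
    exact abs_eq_zero.mp (le_antisymm hge (abs_nonneg _))
  refine ⟨σ, hσ0, hσ1, ?_⟩
  have hIoo : EqOn G 0 (Ioo (0:ℝ) σ) := by
    intro u hu
    have hev : Qf G 0 =ᶠ[nhds u] (fun _ => 0) := by
      filter_upwards [isOpen_Ioo.mem_nhds hu] with x hx
      exact hQ0 x ⟨hx.1.le, hx.2.le⟩
    have h1 : HasDerivAt (fun _ : ℝ => (0:ℝ)) (G u) u :=
      (hev.hasDerivAt_iff).mp (Qf_hasDeriv hG 0 u)
    exact h1.unique (hasDerivAt_const u 0)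
  intro u hu
  have hcl : EqOn G 0 (closure (Ioo (0:ℝ) σ)) := hIoo.closure hG continuous_const
  rw [closure_Ioo hσ0.ne] at hcl
  exact hcl hu

lemma stepB {G H : ℝ → ℝ} (hG : Continuous G) (hHc : Continuous H)
    (hHd : Differentiable ℝ H) (hH' : Continuous (deriv H)) (hH0 : H 0 ≠ 0)
    (heq : ∀ s ∈ Icc (0:ℝ) 1, ∫ u in (0:ℝ)..s, G u * H (Real.sqrt (s * u - u ^ 2)) = 0)
    {a : ℝ} (ha0 : 0 < a) (ha1 : a < 1) (hGa : ∀ u ∈ Icc (0:ℝ) a, G u = 0) :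
    ∃ b : ℝ, a < b ∧ b ≤ 1 ∧ ∀ u ∈ Icc (0:ℝ) b, G u = 0 := by
  obtain ⟨t0, ht0m, ht0⟩ := isCompact_Icc.exists_isMaxOn
    (⟨0, by norm_num⟩ : (Icc (0:ℝ) 1).Nonempty) hH'.abs.continuousOn
  set B := |deriv H t0| + 1 with hBdef
  have hB : ∀ t ∈ Icc (0:ℝ) 1, |deriv H t| ≤ B := by
    intro t ht
    have := (isMaxOn_iff.mp ht0) t ht
    linarith [this]
  have hB0 : (0:ℝ) < B := by positivity
  set c := |H 0| with hcdef
  have hc : (0:ℝ) < c := abs_pos.mpr hH0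
  set δ := (c / (2 * B)) ^ 2 * a with hδdef
  have hδ0 : (0:ℝ) < δ := by positivity
  set b := min 1 (a + δ) with hbdef
  have hab : a < b := lt_min ha1 (by linarith)
  have hb1 : b ≤ 1 := min_le_left _ _
  have hbδ : b - a ≤ δ := by
    have := min_le_right 1 (a + δ); simp only [hbdef]; linarith [this]
  obtain ⟨s₁, hs₁m, hs₁⟩ := isCompact_Icc.exists_isMaxOn
    (⟨a, left_mem_Icc.mpr hab.le⟩ : (Icc a b).Nonempty) ((Qf_cont hG a).abs.continuousOn)
  set N := |Qf G a s₁| with hNdef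
  have hN : ∀ s ∈ Icc a b, |Qf G a s| ≤ N := isMaxOn_iff.mp hs₁
  have hN0 : (0:ℝ) ≤ N := abs_nonneg _
  have hsqa : Real.sqrt a ≠ 0 := (Real.sqrt_pos.mpr ha0).ne'
  have key : ∀ s ∈ Icc a b, |Qf G a s| * c ≤ N * c / 2 := by
    intro s hs
    rcases eq_or_lt_of_le hs.1 with heqa | has
    · rw [← heqa]
      simp only [Qf, intervalIntegral.integral_same, abs_zero, zero_mul]
      positivity
    · have hs1' : s ≤ 1 := hs.2.trans hb1
      set C2 := N * ((B / 2) * (Real.sqrt a)⁻¹) with hC2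
      have hC20 : (0:ℝ) ≤ C2 := by positivity
      have hdom : ∀ u ∈ Set.uIoc a s, ‖Qf G a u * Wk H s u‖ ≤ C2 * (s - u) ^ (-(1/2) : ℝ) := by
        intro u hu
        rw [uIoc_of_le has.le] at hu
        have h1 : |Qf G a u| ≤ N := hN u ⟨hu.1.le, hu.2.trans hs.2⟩
        have h2 : |Wk H s u| ≤ (B / 2) * (Real.sqrt a)⁻¹ * (s - u) ^ (-(1/2) : ℝ) :=
          Wk_bound_B hB ha0 hu.1.le hu.2 hs1'
        rw [norm_mul, Real.norm_eq_abs, Real.norm_eq_abs]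
        calc |Qf G a u| * |Wk H s u|
            ≤ N * ((B / 2) * (Real.sqrt a)⁻¹ * (s - u) ^ (-(1/2) : ℝ)) :=
              mul_le_mul h1 h2 (abs_nonneg _) hN0
          _ = C2 * (s - u) ^ (-(1/2) : ℝ) := by rw [hC2]; ring
      have hgint : IntervalIntegrable (fun u => C2 * (s - u) ^ (-(1/2) : ℝ)) volume a s :=
        (intervalIntegrable_flip a s).const_mul _
      have hQWint : IntervalIntegrable (fun u => Qf G a u * Wk H s u) volume a s := by
        refine hgint.mono_fun
          (((Qf_cont hG a).measurable.mul (Wk_meas H hH' s)).aestronglyMeasurable) ?_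
        filter_upwards [ae_restrict_mem measurableSet_uIoc] with u hu
        exact (hdom u hu).trans ((le_abs_self _).trans_eq (Real.norm_eq_abs _).symm)
      have hibp := ibp hG hHc hHd ha0.le has.le
        (fun u hu => hGa u ⟨hu.1.le, hu.2⟩) (heq s ⟨by linarith, hs1'⟩) hQWint
      have hest : ‖∫ u in a..s, Qf G a u * Wk H s u‖
          ≤ |∫ u in a..s, C2 * (s - u) ^ (-(1/2) : ℝ)| := by
        apply intervalIntegral.norm_integral_le_abs_of_norm_le _ hgint
        filter_upwards [ae_restrict_mem measurableSet_uIoc] with u hu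
        exact hdom u hu
      have habs : |∫ u in a..s, C2 * (s - u) ^ (-(1/2) : ℝ)|
          = C2 * (2 * Real.sqrt (s - a)) := by
        rw [intervalIntegral.integral_const_mul, integral_flip has.le,
          abs_of_nonneg (by positivity)]
      have hsqδ : Real.sqrt δ = c / (2 * B) * Real.sqrt a := by
        rw [hδdef, Real.sqrt_mul (sq_nonneg _), Real.sqrt_sq (by positivity)]
      have hmono : Real.sqrt (s - a) ≤ Real.sqrt δ :=
        Real.sqrt_le_sqrt (by linarith [hs.2])
      have hfin : |Qf G a s| * c ≤ C2 * (2 * Real.sqrt δ) := by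
        have h3 : |Qf G a s| * c = |Qf G a s * H 0| := by rw [abs_mul, hcdef]
        rw [h3, hibp, ← Real.norm_eq_abs]
        refine (hest.trans (le_of_eq habs)).trans ?_
        exact mul_le_mul_of_nonneg_left (by linarith) hC20
      refine hfin.trans (le_of_eq ?_)
      rw [hC2, hsqδ]
      field_simp
  have hNzero : N = 0 := by
    have h1 := key s₁ hs₁m
    rw [← hNdef] at h1
    nlinarith
  have hQ0 : ∀ s ∈ Icc a b, Qf G a s = 0 := by
    intro s hs
    have := hN s hs
    rw [hNzero] at this
    exact abs_eq_zero.mp (le_antisymm this (abs_nonneg _))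
  refine ⟨b, hab, hb1, ?_⟩
  have hIoo : EqOn G 0 (Ioo a b) := by
    intro u hu
    have hev : Qf G a =ᶠ[nhds u] (fun _ => 0) := by
      filter_upwards [isOpen_Ioo.mem_nhds hu] with x hx
      exact hQ0 x ⟨hx.1.le, hx.2.le⟩
    have h1 : HasDerivAt (fun _ : ℝ => (0:ℝ)) (G u) u :=
      (hev.hasDerivAt_iff).mp (Qf_hasDeriv hG a u)
    exact h1.unique (hasDerivAt_const u 0)
  have hcl : EqOn G 0 (closure (Ioo a b)) := hIoo.closure hG continuous_const
  rw [closure_Ioo hab.ne] at hcl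
  intro u hu
  rcases le_total u a with h | h
  · exact hGa u ⟨hu.1, h⟩
  · exact hcl ⟨h, hu.2⟩

/-- Lemma 2.6 base case: kernel `H(√(su-u²))` with `H 0 ≠ 0` annihilating `G` forces `G ≡ 0`. -/
lemma base_case {G H : ℝ → ℝ} (hG : Continuous G) (hHc : Continuous H)
    (hHd : Differentiable ℝ H) (hH' : Continuous (deriv H)) (hH0 : H 0 ≠ 0)
    (heq : ∀ s ∈ Icc (0:ℝ) 1, ∫ u in (0:ℝ)..s, G u * H (Real.sqrt (s * u - u ^ 2)) = 0) :
    EqOn G 0 (Icc (0:ℝ) 1) := by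
  obtain ⟨σ, hσ0, hσ1, hσ⟩ := stepA hG hHc hHd hH' hH0 heq
  set T : Set ℝ := {t | t ∈ Icc (0:ℝ) 1 ∧ ∀ u ∈ Icc (0:ℝ) t, G u = 0} with hT
  have hTne : σ ∈ T := ⟨⟨hσ0.le, hσ1⟩, hσ⟩
  have hTbdd : BddAbove T := ⟨1, fun t ht => ht.1.2⟩
  set A := sSup T with hA
  have hσA : σ ≤ A := le_csSup hTbdd hTne
  have hA1 : A ≤ 1 := csSup_le ⟨σ, hTne⟩ (fun t ht => ht.1.2)
  have hA0 : 0 < A := lt_of_lt_of_le hσ0 hσA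
  have hIco : ∀ u ∈ Ico (0:ℝ) A, G u = 0 := by
    intro u hu
    obtain ⟨t, htT, hut⟩ := exists_lt_of_lt_csSup ⟨σ, hTne⟩ hu.2
    exact htT.2 u ⟨hu.1, hut.le⟩
  have hGA : ∀ u ∈ Icc (0:ℝ) A, G u = 0 := by
    have h1 : EqOn G 0 (Ico (0:ℝ) A) := fun u hu => hIco u hu
    have h2 : EqOn G 0 (closure (Ico (0:ℝ) A)) := h1.closure hG continuous_const
    rw [closure_Ico hA0.ne] at h2
    exact fun u hu => h2 hu
  rcases eq_or_lt_of_le hA1 with hAeq | hAlt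
  · intro u hu
    exact hGA u (by rw [hAeq]; exact hu)
  · obtain ⟨b, hab, hb1, hball⟩ := stepB hG hHc hHd hH' hH0 heq hA0 hAlt hGA
    have : b ≤ A := le_csSup hTbdd ⟨⟨by linarith [hA0], hb1⟩, hball⟩
    linarith

lemma k_hasDerivAt {H : ℝ → ℝ} (hHc : Continuous H) (hHd : Differentiable ℝ H)
    (m : ℕ) (x : ℝ) :
    HasDerivAt (fun y : ℝ => H (Real.sqrt y) * y ^ (m + 1))
      ((((m:ℝ) + 1) * H (Real.sqrt x) + 1 / 2 * Real.sqrt x * deriv H (Real.sqrt x)) * x ^ m)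
      x := by
  by_cases hx : x = 0
  · subst hx
    rw [hasDerivAt_iff_tendsto_slope]
    have hcont : ContinuousAt (fun y : ℝ => H (Real.sqrt y) * y ^ m) 0 :=
      ((hHc.comp Real.continuous_sqrt).mul (continuous_pow m)).continuousAt
    have hval : H (Real.sqrt 0) * 0 ^ m
        = (((m:ℝ) + 1) * H (Real.sqrt 0) + 1 / 2 * Real.sqrt 0 * deriv H (Real.sqrt 0)) * 0 ^ m := by
      rcases Nat.eq_zero_or_pos m with hm | hm
      · subst hm; simp
      · simp [zero_pow hm.ne']
    have htend := hcont.tendsto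
    rw [hval] at htend
    refine (htend.mono_left nhdsWithin_le_nhds).congr' ?_
    filter_upwards [self_mem_nhdsWithin] with y hy
    have hy0 : (y : ℝ) ≠ 0 := hy
    simp only [slope_def_field, Real.sqrt_zero]
    rw [zero_pow (Nat.succ_ne_zero m), mul_zero, sub_zero, sub_zero, pow_succ]
    field_simp
  · have h1 : HasDerivAt (fun y : ℝ => Real.sqrt y) (1 / (2 * Real.sqrt x)) x :=
      Real.hasDerivAt_sqrt hx
    have h2 : HasDerivAt H (deriv H (Real.sqrt x)) (Real.sqrt x) := (hHd _).hasDerivAt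
    have h3 := h2.comp x h1
    have h4 : HasDerivAt (fun y : ℝ => y ^ (m + 1)) (((m:ℝ) + 1) * x ^ m) x := by
      simpa using hasDerivAt_pow (m + 1) x
    have h5 := h3.mul h4
    refine h5.congr_deriv ?_
    symm
    simp only [Function.comp_apply]
    rcases lt_or_gt_of_ne hx with hneg | hpos
    · have hs0 : Real.sqrt x = 0 := Real.sqrt_eq_zero'.mpr hneg.le
      rw [hs0]
      norm_num
      ring
    · have hs : Real.sqrt x ≠ 0 := (Real.sqrt_pos.mpr hpos).ne'
      have hxx : Real.sqrt x * Real.sqrt x = x := Real.mul_self_sqrt hpos.le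
      field_simp
      linear_combination (x ^ m * deriv H (Real.sqrt x)) * hxx

lemma triangle_swap {g : ℝ → ℝ → ℝ} (hg : Continuous (Function.uncurry g)) {σ : ℝ}
    (hσ : 0 ≤ σ) :
    ∫ s in (0:ℝ)..σ, (∫ u in (0:ℝ)..s, g s u) = ∫ u in (0:ℝ)..σ, (∫ s in u..σ, g s u) := by
  classical
  set gI : ℝ → ℝ → ℝ := fun s u => if u ≤ s then g s u else 0 with hgI
  have hgcs : ∀ s, Continuous (g s) := fun s => hg.comp (Continuous.prodMk_right s)
  have hgcu : ∀ u, Continuous (fun s => g s u) :=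
    fun u => hg.comp (continuous_id.prodMk continuous_const)
  have hgI_meas_u : ∀ s, Measurable (gI s) := fun s =>
    Measurable.ite measurableSet_Iic (hgcs s).measurable measurable_const
  have hgI_meas_s : ∀ u, Measurable (fun s => gI s u) := fun u =>
    Measurable.ite measurableSet_Ici (hgcu u).measurable measurable_const
  have habs : ∀ s u, ‖gI s u‖ ≤ ‖g s u‖ := by
    intro s u
    by_cases h : u ≤ s
    · simp [hgI, h]
    · simp [hgI, h, norm_nonneg]
  have hgI_int : ∀ s b c : ℝ, IntervalIntegrable (gI s) volume b c := by
    intro s b c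
    refine ((hgcs s).intervalIntegrable b c).mono_fun (hgI_meas_u s).aestronglyMeasurable ?_
    filter_upwards with u using habs s u
  have hgI_int_s : ∀ u b c : ℝ, IntervalIntegrable (fun s => gI s u) volume b c := by
    intro u b c
    refine ((hgcu u).intervalIntegrable b c).mono_fun (hgI_meas_s u).aestronglyMeasurable ?_
    filter_upwards with s using habs s u
  have step1 : ∀ s ∈ uIcc (0:ℝ) σ, (∫ u in (0:ℝ)..s, g s u) = ∫ u in (0:ℝ)..σ, gI s u := by
    intro s hs
    rw [uIcc_of_le hσ] at hs
    have e1 : ∫ u in (0:ℝ)..s, gI s u = ∫ u in (0:ℝ)..s, g s u :=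
      intervalIntegral.integral_congr (fun u hu => by
        rw [uIcc_of_le hs.1] at hu
        simp [hgI, hu.2])
    have e2 : ∫ u in s..σ, gI s u = 0 := by
      rw [intervalIntegral.integral_congr_ae (g := fun _ => (0:ℝ))
        (Filter.Eventually.of_forall (fun u hu => by
          rw [uIoc_of_le hs.2] at hu
          simp [hgI, not_le.mpr hu.1])), intervalIntegral.integral_zero]
    rw [← intervalIntegral.integral_add_adjacent_intervals (hgI_int s 0 s) (hgI_int s s σ),
      e1, e2, add_zero]
  have hInt : Integrable (Function.uncurry gI)
      ((volume.restrict (Ioc (0:ℝ) σ)).prod (volume.restrict (Ioc (0:ℝ) σ))) := by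
    have hset : MeasurableSet {p : ℝ × ℝ | p.2 ≤ p.1} :=
      (isClosed_le continuous_snd continuous_fst).measurableSet
    have heqfun : Function.uncurry gI
        = Set.indicator {p : ℝ × ℝ | p.2 ≤ p.1} (Function.uncurry g) := by
      funext p
      rcases p with ⟨s, u⟩
      by_cases h : u ≤ s
      · simp [Set.indicator, Function.uncurry, hgI, h]
      · simp [Set.indicator, Function.uncurry, hgI, h]
    rw [heqfun, Measure.prod_restrict]
    refine Integrable.indicator ?_ hset
    have h1 : IntegrableOn (Function.uncurry g) (Icc (0:ℝ) σ ×ˢ Icc (0:ℝ) σ)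
        (volume.prod volume) :=
      ContinuousOn.integrableOn_compact (isCompact_Icc.prod isCompact_Icc) hg.continuousOn
    exact h1.mono_set (prod_mono Ioc_subset_Icc_self Ioc_subset_Icc_self)
  have hswap := MeasureTheory.integral_integral_swap hInt
  have lhs_eq : ∫ s in (0:ℝ)..σ, (∫ u in (0:ℝ)..s, g s u)
      = ∫ s in Ioc (0:ℝ) σ, (∫ u in Ioc (0:ℝ) σ, gI s u) := by
    rw [intervalIntegral.integral_congr step1, intervalIntegral.integral_of_le hσ]
    simp only [intervalIntegral.integral_of_le hσ]
  have rhs_eq : ∫ u in Ioc (0:ℝ) σ, (∫ s in Ioc (0:ℝ) σ, gI s u)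
      = ∫ u in (0:ℝ)..σ, (∫ s in u..σ, g s u) := by
    rw [← intervalIntegral.integral_of_le hσ]
    apply intervalIntegral.integral_congr
    intro u hu
    rw [uIcc_of_le hσ] at hu
    show (∫ s in Ioc (0:ℝ) σ, gI s u) = ∫ s in u..σ, g s u
    rw [← intervalIntegral.integral_of_le hσ]
    have hae : ∀ᵐ s : ℝ, s ≠ u := by
      have h0 : (volume : Measure ℝ) {u} = 0 := measure_singleton u
      filter_upwards [compl_mem_ae_iff.mpr h0] with s hs
      simpa using hs
    have e1 : ∫ s in (0:ℝ)..u, gI s u = 0 := by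
      rw [intervalIntegral.integral_congr_ae (g := fun _ => (0:ℝ)) ?_,
        intervalIntegral.integral_zero]
      filter_upwards [hae] with s hsne hsm
      rw [uIoc_of_le hu.1] at hsm
      have : s < u := lt_of_le_of_ne hsm.2 hsne
      simp [hgI, not_le.mpr this]
    have e2 : ∫ s in u..σ, gI s u = ∫ s in u..σ, g s u :=
      intervalIntegral.integral_congr (fun s hsm => by
        rw [uIcc_of_le hu.2] at hsm
        simp [hgI, hsm.1])
    rw [← intervalIntegral.integral_add_adjacent_intervals (hgI_int_s u 0 u)
      (hgI_int_s u u σ), e1, zero_add, e2]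
  rw [lhs_eq, hswap, rhs_eq]

lemma keyInd : ∀ (m : ℕ) (F : ℝ → ℝ), Continuous F → ∀ (H : ℝ → ℝ),
    ContDiff ℝ (⊤ : ℕ∞) H → H 0 ≠ 0 →
    (∀ s ∈ Icc (0:ℝ) 1, ∫ u in (0:ℝ)..s,
      F u * H (Real.sqrt (s * u - u ^ 2)) * (s * u - u ^ 2) ^ m = 0) →
    EqOn F 0 (Icc (0:ℝ) 1) := by
  intro m
  induction m with
  | zero =>
    intro F hF H hH hH0 heq
    have hHd : Differentiable ℝ H := hH.differentiable (by simp)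
    have hH' : Continuous (deriv H) := ((contDiff_infty_iff_deriv.mp hH).2).continuous
    apply base_case hF hH.continuous hHd hH' hH0
    intro s hs
    have := heq s hs
    simpa using this
  | succ m ih =>
    intro F hF H hH hH0 heq
    have hHd : Differentiable ℝ H := hH.differentiable (by simp)
    have hHder : ContDiff ℝ (⊤ : ℕ∞) (deriv H) := (contDiff_infty_iff_deriv.mp hH).2
    have hH' : Continuous (deriv H) := hHder.continuous
    set Ht : ℝ → ℝ := fun t => ((m:ℝ) + 1) * H t + 1 / 2 * t * deriv H t with hHt
    have hHtc : ContDiff ℝ (⊤ : ℕ∞) Ht :=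
      (contDiff_const.mul hH).add ((contDiff_const.mul contDiff_id).mul hHder)
    have hHt0 : Ht 0 ≠ 0 := by
      have : Ht 0 = ((m:ℝ) + 1) * H 0 := by simp [hHt]
      rw [this]
      exact mul_ne_zero (by positivity) hH0
    set g : ℝ → ℝ → ℝ :=
      fun s u => u * F u * Ht (Real.sqrt (s * u - u ^ 2)) * (s * u - u ^ 2) ^ m with hg
    have hpoly : Continuous fun p : ℝ × ℝ => p.1 * p.2 - p.2 ^ 2 := by fun_prop
    have hgc : Continuous (Function.uncurry g) :=
      ((continuous_snd.mul (hF.comp continuous_snd)).mul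
        (hHtc.continuous.comp (Real.continuous_sqrt.comp hpoly))).mul (hpoly.pow m)
    set Θ : ℝ → ℝ := fun s => ∫ u in (0:ℝ)..s, g s u with hΘ
    have hΘc : Continuous Θ :=
      continuous_parametric_intervalIntegral_of_continuous hgc continuous_id
    have hΞ : ∀ σ ∈ Icc (0:ℝ) 1, ∫ s in (0:ℝ)..σ, Θ s = 0 := by
      intro σ hσ
      have hswap := triangle_swap hgc hσ.1
      have hinner : ∀ u ∈ uIcc (0:ℝ) σ, (∫ s in u..σ, g s u)
          = F u * (H (Real.sqrt (σ * u - u ^ 2)) * (σ * u - u ^ 2) ^ (m + 1)) := by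
        intro u hu
        rw [uIcc_of_le hσ.1] at hu
        have hd : ∀ s ∈ uIcc u σ, HasDerivAt
            (fun s => F u * (H (Real.sqrt (s * u - u ^ 2)) * (s * u - u ^ 2) ^ (m + 1)))
            (g s u) s := by
          intro s _
          have hinner2 : HasDerivAt (fun s : ℝ => s * u - u ^ 2) u s := by
            simpa using ((hasDerivAt_id s).mul_const u).sub_const (u ^ 2)
          have hk := (k_hasDerivAt hH.continuous hHd m (s * u - u ^ 2)).comp s hinner2
          have hkc := hk.const_mul (F u)
          refine hkc.congr_deriv ?_
          symm
          simp only [hg, hHt, Function.comp]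
          ring
        have hint : IntervalIntegrable (fun s => g s u) volume u σ :=
          (hgc.comp (continuous_id.prodMk continuous_const)).intervalIntegrable u σ
        rw [intervalIntegral.integral_eq_sub_of_hasDerivAt hd hint,
          show u * u - u ^ 2 = 0 by ring]
        simp [zero_pow (Nat.succ_ne_zero m)]
      calc ∫ s in (0:ℝ)..σ, Θ s = ∫ u in (0:ℝ)..σ, (∫ s in u..σ, g s u) := hswap
        _ = ∫ u in (0:ℝ)..σ, F u * (H (Real.sqrt (σ * u - u ^ 2))
              * (σ * u - u ^ 2) ^ (m + 1)) := intervalIntegral.integral_congr hinner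
        _ = ∫ u in (0:ℝ)..σ, F u * H (Real.sqrt (σ * u - u ^ 2))
              * (σ * u - u ^ 2) ^ (m + 1) :=
            intervalIntegral.integral_congr (fun u _ => by ring)
        _ = 0 := heq σ hσ
    have hΘ0 : ∀ s ∈ Icc (0:ℝ) 1, Θ s = 0 := by
      have hIoo : EqOn Θ 0 (Ioo (0:ℝ) 1) := by
        intro s hs
        have hd : HasDerivAt (fun σ => ∫ t in (0:ℝ)..σ, Θ t) (Θ s) s :=
          intervalIntegral.integral_hasDerivAt_right (hΘc.intervalIntegrable _ _)
            (hΘc.stronglyMeasurableAtFilter _ _) hΘc.continuousAt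
        have hev : (fun σ => ∫ t in (0:ℝ)..σ, Θ t) =ᶠ[nhds s] (fun _ => 0) := by
          filter_upwards [isOpen_Ioo.mem_nhds hs] with x hx
          exact hΞ x ⟨hx.1.le, hx.2.le⟩
        exact ((hev.hasDerivAt_iff).mp hd).unique (hasDerivAt_const s 0)
      intro s hs
      have hcl : EqOn Θ 0 (closure (Ioo (0:ℝ) 1)) := hIoo.closure hΘc continuous_const
      rw [closure_Ioo (by norm_num : (0:ℝ) ≠ 1)] at hcl
      exact hcl hs
    have hz := ih (fun u => u * F u) (continuous_id.mul hF) Ht hHtc hHt0 (by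
      intro s hs
      have := hΘ0 s hs
      simpa [hΘ, hg] using this)
    have hIoc : EqOn F 0 (Ioc (0:ℝ) 1) := by
      intro y hy
      have h1 : y * F y = 0 := hz ⟨hy.1.le, hy.2⟩
      simp only [Pi.zero_apply]
      rcases mul_eq_zero.mp h1 with h | h
      · exact absurd h hy.1.ne'
      · exact h
    intro x hx
    have hcl : EqOn F 0 (closure (Ioc (0:ℝ) 1)) := hIoc.closure hF continuous_const
    rw [closure_Ioc (by norm_num : (0:ℝ) ≠ 1)] at hcl
    exact hcl hx

end Thm27Aux

/-- Odd case of Theorem 2.7 (via Lemma 2.6): for odd `n ≥ 3` the kernel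
`H((su-u²)^{1/2})(su-u²)^{(n-3)/2}` annihilating `F` forces `F ≡ 0`. -/
theorem thm_2_7_odd (n : ℕ) (hn : 3 ≤ n) (hodd : Odd n) (F H : ℝ → ℝ)
    (hF : ContinuousOn F (Icc 0 1)) (hH : ContDiff ℝ (⊤ : ℕ∞) H) (hH0 : H 0 ≠ 0)
    (heq : ∀ s ∈ Icc (0:ℝ) 1, ∫ u in (0:ℝ)..s,
      F u * H (Real.sqrt (s * u - u ^ 2)) * (s * u - u ^ 2) ^ (((n : ℝ) - 3) / 2) = 0) :
    EqOn F 0 (Icc 0 1) := by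
  obtain ⟨m, hm⟩ : ∃ m : ℕ, n = 2 * m + 3 := by
    obtain ⟨k, hk⟩ := hodd
    exact ⟨k - 1, by omega⟩
  set F2 : ℝ → ℝ := fun x => F (↑(projIcc (0:ℝ) 1 zero_le_one x)) with hF2def
  have hF2c : Continuous F2 := hF.comp_continuous
    (continuous_subtype_val.comp continuous_projIcc)
    (fun x => (projIcc (0:ℝ) 1 zero_le_one x).2)
  have hH2 : ContDiff ℝ (⊤ : ℕ∞) H := hH.of_le (by simp)
  have heq2 : ∀ s ∈ Icc (0:ℝ) 1, ∫ u in (0:ℝ)..s,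
      F2 u * H (Real.sqrt (s * u - u ^ 2)) * (s * u - u ^ 2) ^ m = 0 := by
    intro s hs
    have hcongr : (∫ u in (0:ℝ)..s, F2 u * H (Real.sqrt (s * u - u ^ 2))
          * (s * u - u ^ 2) ^ m)
        = ∫ u in (0:ℝ)..s, F u * H (Real.sqrt (s * u - u ^ 2))
          * (s * u - u ^ 2) ^ (((n:ℝ) - 3) / 2) := by
      apply intervalIntegral.integral_congr
      intro u hu
      show F2 u * H (Real.sqrt (s * u - u ^ 2)) * (s * u - u ^ 2) ^ m
          = F u * H (Real.sqrt (s * u - u ^ 2)) * (s * u - u ^ 2) ^ (((n:ℝ) - 3) / 2)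
      rw [uIcc_of_le hs.1] at hu
      have hmem : u ∈ Icc (0:ℝ) 1 := ⟨hu.1, hu.2.trans hs.2⟩
      have h1 : F2 u = F u := by rw [hF2def]; simp [projIcc_of_mem zero_le_one hmem]
      have h2 : (s * u - u ^ 2) ^ (((n:ℝ) - 3) / 2) = (s * u - u ^ 2) ^ (m : ℕ) := by
        rw [show ((n:ℝ) - 3) / 2 = ((m : ℕ) : ℝ) by rw [hm]; push_cast; ring,
          Real.rpow_natCast]
      rw [h1, h2]
    rw [hcongr]
    exact heq s hs
  have hall := Thm27Aux.keyInd m F2 hF2c H hH2 hH0 heq2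
  intro x hx
  have h1 : F2 x = F x := by rw [hF2def]; simp [projIcc_of_mem zero_le_one hx]
  rw [← h1]
  exact hall hx
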